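/- arXiv:2311.18114 — 4 statements merged into one kernel-verified Lean document; each statement's English description precedes it below -/
import Mathlib

section
/- In a DFA game G, if the initial state s₀ belongs to Win_m(G) for some m, then there exists a strategy f : X* → Y for the controller such that every play consistent with f reaches an accepting state of G within at most m rounds. -/
variable {S X Y : Type}

/-- Controllable preimage in a DFA game. -/
def PreC (δ : S → X × Y → S) (E : Set S) : Set S :=
  {s | ∃ y : Y, ∀ x : X, δ s (x, y) ∈ E}

/-- Winning-region approximates: `Win₀ = F`, `Win_{k+1} = Win_k ∪ PreC (Win_k)`. -/
def Win (δ : S → X × Y → S) (F : Set S) : ℕ → Set S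
  | 0 => F
  | k + 1 => Win δ F k ∪ PreC δ (Win δ F k)

/-- The run of the play generated by strategy `f : X* → Y` against the
environment sequence `xs : ℕ → X`, starting from `s₀`. -/
def run (δ : S → X × Y → S) (s₀ : S) (f : List X → Y) (xs : ℕ → X) : ℕ → S
  | 0 => s₀
  | k + 1 => δ (run δ s₀ f xs k) (xs k, f (List.ofFn fun i : Fin k => xs i))

lemma run_shift (δ : S → X × Y → S) (s₀ : S) (f : List X → Y) (xs : ℕ → X) :
    ∀ k, run δ s₀ f xs (k + 1) =
      run δ (δ s₀ (xs 0, f [])) (fun l => f (xs 0 :: l)) (fun i => xs (i + 1)) k := by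
  intro k
  induction k with
  | zero => simp [run]
  | succ k ih =>
    have hl : (List.ofFn fun i : Fin (k + 1) => xs i)
        = xs 0 :: List.ofFn fun i : Fin k => xs (i + 1) := by
      rw [List.ofFn_succ]
      rfl
    show δ (run δ s₀ f xs (k+1)) (xs (k+1), f (List.ofFn fun i : Fin (k+1) => xs i)) = _
    rw [ih, hl]
    rfl

/-- If `s₀ ∈ Win_m(G)` then the controller has a strategy forcing every play
consistent with it to reach an accepting state within at most `m` rounds. -/
theorem stmt2 [Fintype S] [Fintype X] [Fintype Y] [Nonempty Y]
    (δ : S → X × Y → S) (F : Set S) (s₀ : S) (m : ℕ)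
    (hs : s₀ ∈ Win δ F m) :
    ∃ f : List X → Y, ∀ xs : ℕ → X, ∃ k ≤ m, run δ s₀ f xs k ∈ F := by
  induction m generalizing s₀ with
  | zero =>
    exact ⟨fun _ => Classical.arbitrary Y, fun xs => ⟨0, le_refl 0, hs⟩⟩
  | succ m ih =>
    rcases hs with h | ⟨y, hy⟩
    · obtain ⟨f, hf⟩ := ih s₀ h
      refine ⟨f, fun xs => ?_⟩
      obtain ⟨k, hk, hkF⟩ := hf xs
      exact ⟨k, hk.trans (Nat.le_succ m), hkF⟩
    · -- for each x, a strategy from δ s₀ (x, y)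
      choose g hg using fun x => ih (δ s₀ (x, y)) (hy x)
      refine ⟨fun l => match l with | [] => y | x :: l' => g x l', fun xs => ?_⟩
      obtain ⟨k, hk, hkF⟩ := hg (xs 0) (fun i => xs (i + 1))
      refine ⟨k + 1, Nat.succ_le_succ hk, ?_⟩
      rw [run_shift]
      exact hkF
end

section
/- In a DFA game G, if the initial state s₀ is not in Win(G) (the least fixpoint of the winning-region computation), then for every controller strategy f there exists an environment choice sequence such that the resulting play never visits an accepting state; hence no winning strategy exists. -/
variable {S X Y : Type}

lemma win_mono (δ : S → X × Y → S) (F : Set S) {k m : ℕ} (h : k ≤ m) :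
    Win δ F k ⊆ Win δ F m := by
  induction m with
  | zero => simp_all
  | succ n ih =>
    rcases Nat.lt_or_ge k (n+1) with h' | h'
    · exact (ih (Nat.lt_succ_iff.mp h')).trans Set.subset_union_left
    · have : k = n + 1 := le_antisymm h h'
      subst this; exact le_refl _

lemma key [Fintype X] (δ : S → X × Y → S) (F : Set S) {s : S}
    (hs : s ∉ ⋃ k, Win δ F k) (y : Y) : ∃ x, δ s (x, y) ∉ ⋃ k, Win δ F k := by
  by_contra h
  push_neg at h
  have h' : ∀ x : X, ∃ k, δ s (x, y) ∈ Win δ F k := by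
    intro x; simpa [Set.mem_iUnion] using h x
  choose g hg using h'
  set K := Finset.univ.sup g with hK
  have hall : ∀ x : X, δ s (x, y) ∈ Win δ F K := fun x =>
    win_mono δ F (Finset.le_sup (Finset.mem_univ x)) (hg x)
  have : s ∈ Win δ F (K + 1) := Or.inr ⟨y, hall⟩
  exact hs (Set.mem_iUnion.mpr ⟨K + 1, this⟩)

open Classical in
noncomputable def pick [Nonempty X] (δ : S → X × Y → S) (F : Set S) (s : S) (y : Y) : X :=
  if h : ∃ x, δ s (x, y) ∉ ⋃ k, Win δ F k then h.choose else Classical.arbitrary X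

lemma pick_spec [Fintype X] [Nonempty X] (δ : S → X × Y → S) (F : Set S) {s : S}
    (hs : s ∉ ⋃ k, Win δ F k) (y : Y) :
    δ s (pick δ F s y, y) ∉ ⋃ k, Win δ F k := by
  have h : ∃ x, δ s (x, y) ∉ ⋃ k, Win δ F k := key δ F hs y
  rw [pick, dif_pos h]
  exact h.choose_spec

noncomputable def aux [Nonempty X] (δ : S → X × Y → S) (F : Set S) (s₀ : S)
    (f : List X → Y) : ℕ → S × List X
  | 0 => (s₀, [])
  | k + 1 =>
    let p := aux δ F s₀ f k
    let x := pick δ F p.1 (f p.2)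
    (δ p.1 (x, f p.2), p.2 ++ [x])

/-- If `s₀ ∉ Win(G) = ⋃_k Win_k(G)`, then against every controller strategy `f`
the environment has a choice sequence whose play never visits an accepting
state; hence no winning strategy exists. -/
theorem stmt3 [Fintype S] [Fintype X] [Fintype Y] [Nonempty X]
    (δ : S → X × Y → S) (F : Set S) (s₀ : S)
    (hs : s₀ ∉ ⋃ k, Win δ F k) :
    ∀ f : List X → Y, ∃ xs : ℕ → X, ∀ k, run δ s₀ f xs k ∉ F := by
  intro f
  set xs : ℕ → X := fun k => pick δ F (aux δ F s₀ f k).1 (f (aux δ F s₀ f k).2) with hxs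
  refine ⟨xs, ?_⟩
  have hsafe : ∀ k, (aux δ F s₀ f k).1 ∉ ⋃ k, Win δ F k := by
    intro k
    induction k with
    | zero => exact hs
    | succ n ih => exact pick_spec δ F ih _
  have hlist : ∀ k, (aux δ F s₀ f k).2 = List.ofFn (fun i : Fin k => xs i) := by
    intro k
    induction k with
    | zero => simp [aux]
    | succ n ih =>
      show (aux δ F s₀ f n).2 ++ [xs n] = _
      rw [ih, List.ofFn_succ']
      simp [List.concat_eq_append]
  have hrun : ∀ k, run δ s₀ f xs k = (aux δ F s₀ f k).1 := by
    intro k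
    induction k with
    | zero => rfl
    | succ n ih =>
      show δ (run δ s₀ f xs n) (xs n, f (List.ofFn fun i : Fin n => xs i)) = _
      rw [ih, ← hlist n]
      rfl
  intro k hk
  exact hsafe k (Set.mem_iUnion.mpr ⟨0, by rw [← hrun k]; exact hk⟩)
end

section
/- Let A_φ be an NFA over alphabet A and let C = {S₁,…,Sₙ} be a community of services. Construct the composition DFA A_{φ,C} whose states are Q × Σ₁ × … × Σₙ, initial state (q₀, σ₁₀…σₙ₀), accepting states F × F₁ × … × Fₙ, and transitions δ'((q, σ₁…σᵢ…σₙ), (a, q', i, σᵢ')) = (q', σ₁…σᵢ'…σₙ) whenever (σᵢ, a, σᵢ') ∈ δᵢ and (q, a, q') ∈ δ. Then a history h over C is successful (its action sequence is accepted by A_φ and all services end in final states) if and only if there exists a word w accepted by A_{φ,C} whose induced history τ(w) equals h. -/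
variable {A Q : Type} {n : ℕ} {St : Fin n → Type}

/-- NFA acceptance from a given state. -/
def NfaAccepts (δ : Q → A → Q → Prop) (F : Set Q) : Q → List A → Prop
  | q, [] => q ∈ F
  | q, a :: w => ∃ q', δ q a q' ∧ NfaAccepts δ F q' w

/-- A joint configuration of the `n` services. -/
abbrev Config (St : Fin n → Type) := ∀ i, St i

/-- Validity of a history (list of steps `(action, chosen service, new configuration)`)
starting at configuration `c`: at each step the chosen service transitions via its
transition relation and all other services stay put. -/
def ValidHist (δs : ∀ i, St i → A → St i → Prop) :
    Config St → List (A × Fin n × Config St) → Prop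
  | _, [] => True
  | c, (a, o, c') :: t =>
      δs o (c o) a (c' o) ∧ (∀ i, i ≠ o → c' i = c i) ∧ ValidHist δs c' t

/-- The last configuration of a history starting at `c`. -/
def lastConfig (c : Config St) (h : List (A × Fin n × Config St)) : Config St :=
  h.foldl (fun _ x => x.2.2) c

/-- Acceptance of the composition DFA `A_{φ,C}` from state `(q, c)` on a word over the
alphabet `A × Q × (Σ i, Σᵢ)`: each symbol `(a, q', i, σ)` requires an NFA transition
`(q, a, q')` and a transition `(σᵢ, a, σ)` of service `i`, updating the configuration. -/
def CompAccepts (δ : Q → A → Q → Prop) (F : Set Q)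
    (δs : ∀ i, St i → A → St i → Prop) (Fs : ∀ i, Set (St i)) :
    Q → Config St → List (A × Q × Σ i : Fin n, St i) → Prop
  | q, c, [] => q ∈ F ∧ ∀ i, c i ∈ Fs i
  | q, c, (a, q', ⟨i, σ⟩) :: w =>
      δ q a q' ∧ δs i (c i) a σ ∧
        CompAccepts δ F δs Fs q' (Function.update c i σ) w

/-- The history `τ(w)` induced by replaying a word `w` of the composition DFA from
configuration `c` (dropping the `Q`-components). -/
def tau : Config St → List (A × Q × Σ i : Fin n, St i) → List (A × Fin n × Config St)
  | _, [] => []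
  | c, (a, _, ⟨i, σ⟩) :: w =>
      (a, i, Function.update c i σ) :: tau (Function.update c i σ) w

/-- A history `h` over the community is successful (valid, its action sequence accepted
by the NFA `A_φ`, and all services end in final states) iff there is a word `w` accepted
by the composition DFA `A_{φ,C}` with `τ(w) = h`. -/
theorem stmt6 (δ : Q → A → Q → Prop) (F : Set Q) (q₀ : Q)
    (δs : ∀ i, St i → A → St i → Prop) (Fs : ∀ i, Set (St i)) (σ₀ : Config St)
    (h : List (A × Fin n × Config St)) :
    (ValidHist δs σ₀ h ∧ NfaAccepts δ F q₀ (h.map fun x => x.1) ∧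
        ∀ i, lastConfig σ₀ h i ∈ Fs i) ↔
      ∃ w, tau σ₀ w = h ∧ CompAccepts δ F δs Fs q₀ σ₀ w := by
  induction h generalizing q₀ σ₀ with
  | nil =>
    constructor
    · rintro ⟨-, hF, hFs⟩
      exact ⟨[], rfl, hF, hFs⟩
    · rintro ⟨w, hw, hacc⟩
      cases w with
      | nil => exact ⟨trivial, hacc.1, hacc.2⟩
      | cons x w' =>
        obtain ⟨a, q', i, σ⟩ := x
        simp [tau] at hw
  | cons x t ih =>
    obtain ⟨a, o, c'⟩ := x
    constructor
    · rintro ⟨⟨hδs, heq, hvalid⟩, ⟨q', hq, hacc⟩, hFs⟩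
      have hc' : c' = Function.update σ₀ o (c' o) := by
        funext i
        by_cases hi : i = o
        · subst hi; simp
        · simp [Function.update, hi, heq i hi]
      obtain ⟨w, hw, haccw⟩ := (ih q' c').1 ⟨hvalid, hacc, hFs⟩
      refine ⟨(a, q', ⟨o, c' o⟩) :: w, ?_, ?_⟩
      · simp [tau, ← hc', hw]
      · exact ⟨hq, hδs, by rw [← hc']; exact haccw⟩
    · rintro ⟨w, hw, hacc⟩
      cases w with
      | nil => simp [tau] at hw
      | cons x w' =>
        obtain ⟨a', q', i, σ⟩ := x
        simp only [tau, List.cons.injEq, Prod.mk.injEq] at hw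
        obtain ⟨⟨ha, hi, hc⟩, hwt⟩ := hw
        subst ha; subst hi; subst hc
        obtain ⟨hq, hδs, haccw⟩ := hacc
        obtain ⟨hvalid, haccept, hFs⟩ := (ih q' _).2 ⟨w', hwt, haccw⟩
        refine ⟨⟨by simpa using hδs, fun j hj => Function.update_of_ne hj _ _, hvalid⟩,
          ⟨q', hq, haccept⟩, hFs⟩
end

section
/- Let M' be the composition MDP built from the controllable DFA A_act of the NFA A_φ and a stochastic community C̃, with states Q × Σ₁ × … × Σₙ, and let π be a policy on M' with equivalent orchestrator γ. For every finite path ρ = s₀'a₁…sₘ' of M' compatible with π, the probability of its cylinder under (M', π) equals the probability of the corresponding history h = τ̃(ρ) under (γ, C̃): both equal ∏_{k=1}^m P_{oₖ}(σ_{oₖ,k} | σ_{oₖ,k-1}, aₖ). -/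
open scoped Classical

variable {Act Q : Type} {n : ℕ} {St : Fin n → Type}

/-- The transition probability function `P'` of the composition MDP `M'` built from
the controllable DFA `A_act` of the NFA `A_φ` (with transition relation `δ`) and the
stochastic community: from `(q, σ₁…σₙ)` on action `(a, q', i)`, provided
`δ q a q'` holds, the `i`-th service moves stochastically according to `Pᵢ` and all
other services stay put; the `Q`-component deterministically becomes `q'`. -/
noncomputable def Ptrans (δ : Q → Act → Q → Prop)
    (P : ∀ i, St i → Act → St i → ENNReal) :
    (Q × Config St) → (Act × Q × Fin n) → (Q × Config St) → ENNReal :=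
  fun s act s' =>
    if s'.1 = act.2.1 ∧ δ s.1 act.1 act.2.1 ∧ (∀ j, j ≠ act.2.2 → s'.2 j = s.2 j)
    then P act.2.2 (s.2 act.2.2) act.1 (s'.2 act.2.2) else 0

/-- The probability (cylinder probability) of a finite path of `M'`. -/
noncomputable def mdpProb (δ : Q → Act → Q → Prop)
    (P : ∀ i, St i → Act → St i → ENNReal) :
    (Q × Config St) → List ((Act × Q × Fin n) × (Q × Config St)) → ENNReal
  | _, [] => 1
  | s, (a, s') :: ρ => Ptrans δ P s a s' * mdpProb δ P s' ρ

/-- The probability of a history over the community: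
`∏_{k=1}^m P_{oₖ}(σ_{oₖ,k} | σ_{oₖ,k-1}, aₖ)`. -/
noncomputable def histProb (P : ∀ i, St i → Act → St i → ENNReal) :
    Config St → List ((Act × Fin n) × Config St) → ENNReal
  | _, [] => 1
  | c, ((a, o), c') :: t => P o (c o) a (c' o) * histProb P c' t

/-- Validity of a path of the composition MDP: each step follows an `A_act`
transition on the `Q`-component and only the chosen service changes. -/
def ValidPath (δ : Q → Act → Q → Prop) :
    (Q × Config St) → List ((Act × Q × Fin n) × (Q × Config St)) → Prop
  | _, [] => True
  | s, ((a, q', i), s') :: t =>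
      s'.1 = q' ∧ δ s.1 a q' ∧ (∀ j, j ≠ i → s'.2 j = s.2 j) ∧ ValidPath δ s' t

/-- `τ̃`: project a path of `M'` to the corresponding history over the community
by dropping the `Q`-components from states and actions. -/
def dropQ (ρ : List ((Act × Q × Fin n) × (Q × Config St))) :
    List ((Act × Fin n) × Config St) :=
  ρ.map fun x => ((x.1.1, x.1.2.2), x.2.2)

/-- The path is compatible with policy `π`: each action is the one chosen by `π`
on the preceding prefix. -/
def Compat (π : List ((Act × Q × Fin n) × (Q × Config St)) → Act × Q × Fin n)
    (ρ : List ((Act × Q × Fin n) × (Q × Config St))) : Prop :=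
  ∀ k, (h : k < ρ.length) → (ρ.get ⟨k, h⟩).1 = π (ρ.take k)

/-- For every finite path `ρ` of `M'` compatible with a policy `π`, the cylinder
probability of `ρ` under `(M', π)` equals the probability of the corresponding
history `τ̃(ρ)` under the equivalent orchestrator and the community: both equal
`∏_{k=1}^m P_{oₖ}(σ_{oₖ,k} | σ_{oₖ,k-1}, aₖ)`. -/
theorem stmt12 (δ : Q → Act → Q → Prop)
    (P : ∀ i, St i → Act → St i → ENNReal) (q₀ : Q) (σ₀ : Config St)
    (π : List ((Act × Q × Fin n) × (Q × Config St)) → Act × Q × Fin n)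
    (ρ : List ((Act × Q × Fin n) × (Q × Config St)))
    (hv : ValidPath δ (q₀, σ₀) ρ) (hc : Compat π ρ) :
    mdpProb δ P (q₀, σ₀) ρ = histProb P σ₀ (dropQ ρ) := by
  clear hc
  induction ρ generalizing q₀ σ₀ with
  | nil => rfl
  | cons hd tl ih =>
    obtain ⟨⟨a, q', i⟩, s'⟩ := hd
    simp only [ValidPath] at hv
    obtain ⟨h1, h2, h3, h4⟩ := hv
    have := ih s'.1 s'.2 (by simpa using h4)
    simp only [mdpProb, dropQ, List.map_cons, histProb, Ptrans]
    have hcond : s'.1 = q' ∧ δ q₀ a q' ∧ ∀ j, j ≠ i → s'.2 j = σ₀ j := ⟨h1, h2, h3⟩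
    rw [if_pos hcond]
    rw [show (s'.1, s'.2) = s' from rfl] at this
    rw [this]; rfl
end
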